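/- The 2-critical exponent function κ₂ : [0,1] → [0,1] is of Baire class 1, i.e., there exists a sequence of continuous functions f_k : [0,1] → ℝ converging pointwise to κ₂ on [0,1]. -/

import Mathlib

/-- `u` is a `p/q`-power: `u = x^n ++ y` with `x` nonempty, `y` a prefix of `x`,
`ℓ(u) = p` and `ℓ(x) = q`. -/
def IsPQPower {α : Type*} (u : List α) (p q : ℕ) : Prop :=
  0 < p ∧ 0 < q ∧ u.length = p ∧
    ∃ (x y : List α) (n : ℕ), x ≠ [] ∧ 0 < n ∧ y <+: x ∧ x.length = q ∧
      u = (List.replicate n x).flatten ++ y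

/-- `u` is an `s`-power for the rational `s`. -/
def IsPowerOfExp {α : Type*} (u : List α) (s : ℚ) : Prop :=
  ∃ p q : ℕ, IsPQPower u p q ∧ s = (p : ℚ) / q

/-- the finite word `u` occurs as a (contiguous) subword of the infinite word `w`. -/
def InfOccurs {α : Type*} (u : List α) (w : ℕ → α) : Prop :=
  ∃ i : ℕ, u = (List.range u.length).map fun k => w (i + k)

/-- the finite word `w` contains an `r`-power. -/
def ContainsPowFin {α : Type*} (w : List α) (r : ℚ) : Prop :=
  ∃ u : List α, u <:+: w ∧ ∃ s : ℚ, r ≤ s ∧ IsPowerOfExp u s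

/-- the infinite word `w` contains an `r`-power. -/
def ContainsPowInf {α : Type*} (w : ℕ → α) (r : ℚ) : Prop :=
  ∃ u : List α, InfOccurs u w ∧ ∃ s : ℚ, r ≤ s ∧ IsPowerOfExp u s

open Classical in
/-- critical exponent of a finite word. -/
noncomputable def Efin {α : Type*} (w : List α) : EReal :=
  if w = [] then 0
  else sSup {x : EReal | ∃ r : ℚ, ContainsPowFin w r ∧ x = ((r : ℝ) : EReal)}

/-- critical exponent of an infinite word. -/
noncomputable def Einf {α : Type*} (w : ℕ → α) : EReal :=
  sSup {x : EReal | ∃ r : ℚ, ContainsPowInf w r ∧ x = ((r : ℝ) : EReal)}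

/-- concatenation of a finite and an infinite word. -/
def wordCat {α : Type*} (w : List α) (y : ℕ → α) : ℕ → α :=
  fun n => if h : n < w.length then w[n] else y (n - w.length)

/-- the `k`-th digit of the base-`b` expansion of `x`, choosing for `b`-adic
rationals the expansion whose digits are ultimately `b - 1`. -/
noncomputable def baseDigit (b : ℕ) (x : ℝ) (k : ℕ) : ℕ :=
  if x ≤ 0 then 0
  else (⌈x * b ^ (k + 1)⌉ - b * ⌈x * b ^ k⌉ + ((b : ℤ) - 1)).toNat

/-- the base-`b` critical exponent function `κ_b`, with the convention `1/∞ = 0`. -/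
noncomputable def kappaBase (b : ℕ) (x : ℝ) : ℝ :=
  1 / (Einf (baseDigit b x)).toReal

/-- the `2`-critical exponent function `κ₂`. -/
noncomputable def kappa2 : ℝ → ℝ := kappaBase 2

/-- The Thue–Morse sequence. -/
def tm : ℕ → Fin 2
  | 0 => 0
  | (n + 1) => if (n + 1) % 2 = 0 then tm ((n + 1) / 2) else 1 - tm ((n + 1) / 2)
decreasing_by all_goals omega

/-- the real number whose binary expansion is the Thue–Morse sequence. -/
noncomputable def xtau : ℝ := ∑' i : ℕ, ((tm i : ℕ) : ℝ) / 2 ^ (i + 1)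

/-!
Approximate `κ₂ x` by `kappaPrefix k x`, the reciprocal critical exponent of the first `k`
binary digits of `x`. These critical exponents increase to `E(w_x)`, so `kappaPrefix k → κ₂`
pointwise. The first `k` digits of `x` depend only on `⌈x 2^k⌉`, so `kappaPrefix k` is locally
constant off the dyadics `D_k` of level `k`, and multiplying by the cutoff
`min 1 (4^k d(x, D_k))` removes its jumps. The cutoff does not change the limit: if `x` lies
within `4^{-k}` of `D_k`, then digits `k, …, 2k - 1` of `x` are equal, so `E(w_x) ≥ k`. Hence
the cutoff is eventually `1` when `E(w_x) < ∞`, while both sides tend to `0` when `E(w_x) = ∞`.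
-/

open Filter Topology

-- Turns `1 / ∞ = 0` into continuity of inversion on `ℝ≥0∞`.
lemma EReal.one_div_toReal_eq_toReal_inv_toENNReal {e : EReal} (he : 0 ≤ e) :
    1 / e.toReal = (e.toENNReal⁻¹).toReal := by
  rw [ENNReal.toReal_inv, EReal.toReal_toENNReal he, one_div]

section Words

variable {α : Type*}

def wordPrefix (w : ℕ → α) (k : ℕ) : List α := (List.range k).map w

@[simp] lemma length_wordPrefix (w : ℕ → α) (k : ℕ) : (wordPrefix w k).length = k := by
  simp [wordPrefix]

lemma wordPrefix_prefix_of_le (w : ℕ → α) {k l : ℕ} (h : k ≤ l) :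
    wordPrefix w k <+: wordPrefix w l := by
  obtain ⟨d, rfl⟩ := Nat.exists_eq_add_of_le h
  rw [wordPrefix, wordPrefix, List.range_add, List.map_append]
  exact List.prefix_append _ _

lemma infOccurs_iff_exists_infix_wordPrefix {u : List α} {w : ℕ → α} :
    InfOccurs u w ↔ ∃ k, u <:+: wordPrefix w k := by
  constructor
  · rintro ⟨i, hi⟩
    refine ⟨i + u.length, wordPrefix w i, [], ?_⟩
    rw [List.append_nil, hi]
    simp [wordPrefix, List.range_add, Function.comp_def]
  · rintro ⟨k, s, t, hst⟩
    refine ⟨s.length, List.ext_getElem (by simp) fun n h₁ _ => ?_⟩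
    have hn : s.length + n < k := by
      have := congrArg List.length hst
      simp only [List.length_append, length_wordPrefix] at this
      omega
    have := congrArg (·[s.length + n]?) hst
    simp only [List.append_assoc, List.getElem?_append_right (Nat.le_add_right _ _),
      Nat.add_sub_cancel_left, List.getElem?_append_left h₁, wordPrefix, List.getElem?_map,
      List.getElem?_range hn, Option.map_some, List.getElem?_eq_getElem h₁, Option.some.injEq] at this
    simpa using this

lemma containsPowInf_iff_exists_wordPrefix {w : ℕ → α} {r : ℚ} :
    ContainsPowInf w r ↔ ∃ k, ContainsPowFin (wordPrefix w k) r := by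
  simp only [ContainsPowInf, ContainsPowFin, infOccurs_iff_exists_infix_wordPrefix]
  constructor
  · rintro ⟨u, ⟨k, hk⟩, hs⟩
    exact ⟨k, u, hk, hs⟩
  · rintro ⟨k, u, hk, hs⟩
    exact ⟨u, ⟨k, hk⟩, hs⟩

lemma isPowerOfExp_replicate {n : ℕ} (hn : 0 < n) (a : α) :
    IsPowerOfExp (List.replicate n a) n :=
  ⟨n, 1, ⟨hn, one_pos, by simp, [a], [], n, by simp, hn, List.nil_prefix, rfl, by simp⟩,
    by simp⟩

lemma le_Efin_of_containsPowFin {u : List α} {r : ℚ} (h : ContainsPowFin u r) :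
    ((r : ℝ) : EReal) ≤ Efin u := by
  have hu : u ≠ [] := by
    rintro rfl
    obtain ⟨v, hv, -, -, p, -, ⟨hp, -, hlen, -⟩, -⟩ := h
    rw [List.infix_nil.mp hv, List.length_nil] at hlen
    omega
  rw [Efin, if_neg hu]
  exact le_sSup ⟨r, h, rfl⟩

lemma le_Einf_of_containsPowInf {w : ℕ → α} {r : ℚ} (h : ContainsPowInf w r) :
    ((r : ℝ) : EReal) ≤ Einf w :=
  le_sSup ⟨r, h, rfl⟩

lemma one_le_Efin {u : List α} (hu : u ≠ []) : 1 ≤ Efin u := by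
  obtain ⟨a, t, rfl⟩ := List.exists_cons_of_ne_nil hu
  have h : ContainsPowFin (a :: t) 1 :=
    ⟨[a], ⟨[], t, rfl⟩, 1, le_rfl, by simpa using isPowerOfExp_replicate one_pos a⟩
  simpa using le_Efin_of_containsPowFin h

lemma Efin_nonneg (u : List α) : 0 ≤ Efin u := by
  by_cases hu : u = []
  · simp [Efin, hu]
  · exact zero_le_one.trans (one_le_Efin hu)

lemma Efin_mono {u v : List α} (h : u <:+: v) : Efin u ≤ Efin v := by
  by_cases hu : u = []
  · simpa [Efin, hu] using Efin_nonneg v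
  rw [Efin, if_neg hu]
  refine sSup_le ?_
  rintro _ ⟨r, ⟨s, hs, hr⟩, rfl⟩
  exact le_Efin_of_containsPowFin ⟨s, hs.trans h, hr⟩

lemma le_Einf_of_run {w : ℕ → α} {i n : ℕ} {a : α} (hn : 0 < n)
    (h : ∀ j < n, w (i + j) = a) : (n : EReal) ≤ Einf w := by
  have hocc : InfOccurs (List.replicate n a) w :=
    ⟨i, List.ext_getElem (by simp) fun j hj _ => by
      simpa using (h j (by simpa using hj)).symm⟩
  simpa using le_Einf_of_containsPowInf ⟨_, hocc, n, le_rfl, isPowerOfExp_replicate hn a⟩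

lemma one_le_Einf (w : ℕ → α) : 1 ≤ Einf w := by
  simpa using le_Einf_of_run (i := 0) (a := w 0) one_pos (by simp)

lemma Einf_eq_iSup_Efin_wordPrefix (w : ℕ → α) : Einf w = ⨆ k, Efin (wordPrefix w k) := by
  refine le_antisymm (sSup_le ?_) (iSup_le fun k => ?_)
  · rintro _ ⟨r, hr, rfl⟩
    obtain ⟨k, hk⟩ := containsPowInf_iff_exists_wordPrefix.mp hr
    exact (le_Efin_of_containsPowFin hk).trans (le_iSup (fun k => Efin (wordPrefix w k)) k)
  · by_cases hk : wordPrefix w k = []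
    · rw [Efin, if_pos hk]
      exact zero_le_one.trans (one_le_Einf w)
    rw [Efin, if_neg hk]
    refine sSup_le ?_
    rintro _ ⟨r, hr, rfl⟩
    exact le_Einf_of_containsPowInf (containsPowInf_iff_exists_wordPrefix.mpr ⟨k, hr⟩)

lemma tendsto_Efin_wordPrefix (w : ℕ → α) :
    Tendsto (fun k => Efin (wordPrefix w k)) atTop (𝓝 (Einf w)) := by
  rw [Einf_eq_iSup_Efin_wordPrefix]
  exact tendsto_atTop_iSup fun k l hkl => Efin_mono (wordPrefix_prefix_of_le w hkl).isInfix

lemma tendsto_one_div_toReal_Efin_wordPrefix (w : ℕ → α) :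
    Tendsto (fun k => 1 / (Efin (wordPrefix w k)).toReal) atTop (𝓝 (1 / (Einf w).toReal)) := by
  have hE : 0 < Einf w := zero_lt_one.trans_le (one_le_Einf w)
  simp only [EReal.one_div_toReal_eq_toReal_inv_toENNReal (Efin_nonneg _),
    EReal.one_div_toReal_eq_toReal_inv_toENNReal hE.le]
  refine (ENNReal.tendsto_toReal ?_).comp <| (continuous_inv.tendsto _).comp <|
    (EReal.continuous_toENNReal.tendsto _).comp (tendsto_Efin_wordPrefix w)
  exact ENNReal.inv_ne_top.mpr (EReal.toENNReal_ne_zero_iff.mpr hE)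

lemma one_div_toReal_Efin_nonneg (u : List α) : 0 ≤ 1 / (Efin u).toReal :=
  one_div_nonneg.mpr (EReal.toReal_nonneg (Efin_nonneg u))

lemma one_div_toReal_Efin_le_one (u : List α) : 1 / (Efin u).toReal ≤ 1 := by
  by_cases hu : u = []
  · simp [Efin, hu]
  rcases eq_or_ne (Efin u) ⊤ with htop | htop
  · simp [htop]
  have h1 : 1 ≤ (Efin u).toReal := by
    simpa using EReal.toReal_le_toReal (one_le_Efin hu) (EReal.coe_ne_bot 1) htop
  exact (div_le_one (by linarith)).mpr h1

end Words

def dyadics (k : ℕ) : Set ℝ := Set.range fun m : ℤ => (m : ℝ) / 2 ^ k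

lemma dyadics_nonempty (k : ℕ) : (dyadics k).Nonempty := Set.range_nonempty _

lemma baseDigit_of_nonpos (b : ℕ) {x : ℝ} (hx : x ≤ 0) (j : ℕ) : baseDigit b x j = 0 := by
  rw [baseDigit, if_pos hx]

lemma baseDigit_two_of_pos {x : ℝ} (hx : 0 < x) (j : ℕ) :
    baseDigit 2 x j = (⌈x * 2 ^ (j + 1)⌉ - 2 * ⌈x * 2 ^ j⌉ + 1).toNat := by
  rw [baseDigit, if_neg hx.not_ge]
  norm_num

-- `ℤ`-division rounds down, so the right side is `⌈x 2^k⌉` divided by `2^(k-j)`, rounded up.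
lemma ceil_mul_two_pow_of_le (x : ℝ) {j k : ℕ} (h : j ≤ k) :
    ⌈x * 2 ^ j⌉ = -(-⌈x * 2 ^ k⌉ / 2 ^ (k - j)) := by
  have hx : x * 2 ^ j = x * 2 ^ k / ((2 ^ (k - j) : ℕ) : ℝ) := by
    rw [← Nat.add_sub_cancel' h, pow_add]
    push_cast
    field_simp
    rw [Nat.add_sub_cancel_left]
  rw [hx, ← neg_neg ⌈_⌉, ← Int.floor_neg, ← neg_div, Int.floor_div_natCast, Int.floor_neg]
  push_cast
  rfl

lemma wordPrefix_baseDigit_two_eq_of_ceil_eq {y z : ℝ} {k : ℕ}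
    (h : ⌈y * 2 ^ k⌉ = ⌈z * 2 ^ k⌉) :
    wordPrefix (baseDigit 2 y) k = wordPrefix (baseDigit 2 z) k := by
  have hpos : ∀ x : ℝ, 0 < x ↔ 0 < ⌈x * 2 ^ k⌉ := fun x => by
    rw [Int.ceil_pos, mul_pos_iff_of_pos_right (by positivity)]
  refine List.map_congr_left fun j hj => ?_
  have hjk : j + 1 ≤ k := List.mem_range.mp hj
  by_cases hy : 0 < y
  · have hz : 0 < z := (hpos z).mpr (h ▸ (hpos y).mp hy)
    rw [baseDigit_two_of_pos hy, baseDigit_two_of_pos hz, ceil_mul_two_pow_of_le y hjk,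
      ceil_mul_two_pow_of_le y (j.le_succ.trans hjk), ceil_mul_two_pow_of_le z hjk,
      ceil_mul_two_pow_of_le z (j.le_succ.trans hjk), h]
  · have hz : ¬0 < z := fun hz => hy ((hpos y).mpr (h ▸ (hpos z).mp hz))
    rw [baseDigit_of_nonpos 2 (not_lt.mp hy), baseDigit_of_nonpos 2 (not_lt.mp hz)]

lemma eventually_ceil_mul_two_pow_eq {x : ℝ} {k : ℕ} (hx : x ∉ dyadics k) :
    ∀ᶠ y in 𝓝 x, ⌈y * 2 ^ k⌉ = ⌈x * 2 ^ k⌉ := by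
  have hlt : x * 2 ^ k < ⌈x * 2 ^ k⌉ := by
    refine (Int.le_ceil _).lt_of_ne fun h => hx ⟨⌈x * 2 ^ k⌉, ?_⟩
    show (⌈x * 2 ^ k⌉ : ℝ) / 2 ^ k = x
    rw [← h]
    field_simp
  have hmem : Set.Ioo ((⌈x * 2 ^ k⌉ : ℝ) - 1) ⌈x * 2 ^ k⌉ ∈ 𝓝 (x * 2 ^ k) :=
    Ioo_mem_nhds (by linarith [Int.ceil_lt_add_one (x * 2 ^ k)]) hlt
  filter_upwards [(continuous_mul_const _).continuousAt.preimage_mem_nhds hmem] with y hy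
  rw [Int.ceil_eq_iff]
  exact ⟨hy.1, hy.2.le⟩

lemma exists_ceil_mul_two_pow_eq_of_dist_lt {x : ℝ} {m : ℤ} {k : ℕ}
    (h : dist x (m / 2 ^ k) < 1 / 4 ^ k) :
    ∃ c : ℤ, ∀ i, k ≤ i → i ≤ 2 * k → ⌈x * 2 ^ i⌉ = m * 2 ^ (i - k) + c := by
  refine ⟨if x ≤ m / 2 ^ k then 0 else 1, fun i hki hik => ?_⟩
  obtain ⟨d, rfl⟩ := Nat.exists_eq_add_of_le hki
  rw [Nat.add_sub_cancel_left]
  set δ := x - m / 2 ^ k with hδ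
  have hsplit : x * 2 ^ (k + d) = ((m * 2 ^ d : ℤ) : ℝ) + δ * 2 ^ (k + d) := by
    rw [hδ, pow_add]
    push_cast
    field_simp
    ring
  have hsmall : |δ * 2 ^ (k + d)| < 1 := by
    have h4 : (2 : ℝ) ^ (k + d) ≤ 4 ^ k := by
      calc (2 : ℝ) ^ (k + d) ≤ 2 ^ (2 * k) := pow_le_pow_right₀ one_le_two hik
        _ = 4 ^ k := by rw [pow_mul]; norm_num
    rw [abs_mul, abs_of_pos (by positivity : (0 : ℝ) < 2 ^ (k + d))]
    calc |δ| * 2 ^ (k + d) < 1 / 4 ^ k * 2 ^ (k + d) := by gcongr; rwa [← Real.dist_eq]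
      _ ≤ 1 := by rw [one_div_mul_eq_div, div_le_one (by positivity)]; exact h4
  rw [hsplit, Int.ceil_intCast_add, add_right_inj, Int.ceil_eq_iff]
  have hsign : 0 < δ * 2 ^ (k + d) ↔ ¬x ≤ m / 2 ^ k := by
    rw [mul_pos_iff_of_pos_right (by positivity), hδ, sub_pos, not_le]
  obtain ⟨hlo, hhi⟩ := abs_lt.mp hsmall
  split_ifs with hx <;> push_cast
  · exact ⟨by linarith, not_lt.mp (mt hsign.mp (not_not.mpr hx))⟩
  · exact ⟨by linarith [hsign.mpr hx], by linarith⟩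

lemma le_Einf_baseDigit_two_of_dist_lt {x t : ℝ} {k : ℕ} (ht : t ∈ dyadics k)
    (h : dist x t < 1 / 4 ^ k) : (k : EReal) ≤ Einf (baseDigit 2 x) := by
  rcases k.eq_zero_or_pos with rfl | hk
  · exact_mod_cast zero_le_one.trans (one_le_Einf _)
  by_cases hx : x ≤ 0
  · exact le_Einf_of_run (i := 0) hk fun j _ => by rw [zero_add, baseDigit_of_nonpos 2 hx]
  obtain ⟨m, rfl⟩ := ht
  obtain ⟨c, hc⟩ := exists_ceil_mul_two_pow_eq_of_dist_lt h
  refine le_Einf_of_run (i := k) (a := (1 - c).toNat) hk fun j hj => ?_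
  rw [baseDigit_two_of_pos (not_le.mp hx), hc _ (by omega) (by omega), hc _ (by omega) (by omega),
    show k + j + 1 - k = j + 1 by omega, show k + j - k = j by omega, pow_succ]
  congr 1
  ring

noncomputable def kappaPrefix (k : ℕ) (x : ℝ) : ℝ :=
  1 / (Efin (wordPrefix (baseDigit 2 x) k)).toReal

noncomputable def dyadicCutoff (k : ℕ) (x : ℝ) : ℝ :=
  min 1 (4 ^ k * Metric.infDist x (dyadics k))

noncomputable def kappaApprox (k : ℕ) (x : ℝ) : ℝ := kappaPrefix k x * dyadicCutoff k x

lemma kappaPrefix_eventuallyEq {k : ℕ} {x : ℝ} (hx : x ∉ dyadics k) :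
    kappaPrefix k =ᶠ[𝓝 x] fun _ => kappaPrefix k x :=
  (eventually_ceil_mul_two_pow_eq hx).mono fun y hy => by
    simp only [kappaPrefix, wordPrefix_baseDigit_two_eq_of_ceil_eq hy]

lemma continuous_dyadicCutoff (k : ℕ) : Continuous (dyadicCutoff k) :=
  continuous_const.min (continuous_const.mul (Metric.continuous_infDist_pt _))

lemma dyadicCutoff_nonneg (k : ℕ) (x : ℝ) : 0 ≤ dyadicCutoff k x :=
  le_min zero_le_one (mul_nonneg (by positivity) Metric.infDist_nonneg)

lemma dyadicCutoff_le_one (k : ℕ) (x : ℝ) : dyadicCutoff k x ≤ 1 := min_le_left _ _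

lemma kappaApprox_nonneg (k : ℕ) (x : ℝ) : 0 ≤ kappaApprox k x :=
  mul_nonneg (one_div_toReal_Efin_nonneg _) (dyadicCutoff_nonneg k x)

lemma kappaApprox_le_kappaPrefix (k : ℕ) (x : ℝ) : kappaApprox k x ≤ kappaPrefix k x :=
  mul_le_of_le_one_right (one_div_toReal_Efin_nonneg _) (dyadicCutoff_le_one k x)

lemma kappaApprox_le_dyadicCutoff (k : ℕ) (x : ℝ) : kappaApprox k x ≤ dyadicCutoff k x :=
  mul_le_of_le_one_left (dyadicCutoff_nonneg k x) (one_div_toReal_Efin_le_one _)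

lemma continuous_kappaApprox (k : ℕ) : Continuous (kappaApprox k) := by
  refine continuous_iff_continuousAt.mpr fun x => ?_
  by_cases hx : x ∈ dyadics k
  · have h0 : dyadicCutoff k x = 0 := by simp [dyadicCutoff, Metric.infDist_zero_of_mem hx]
    have hlim := (continuous_dyadicCutoff k).tendsto x
    rw [h0] at hlim
    rw [ContinuousAt, kappaApprox, h0, mul_zero]
    exact squeeze_zero (kappaApprox_nonneg k) (kappaApprox_le_dyadicCutoff k) hlim
  · refine ((continuous_dyadicCutoff k).continuousAt.const_mul (kappaPrefix k x)).congr ?_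
    filter_upwards [kappaPrefix_eventuallyEq hx] with y hy
    rw [kappaApprox, hy]

lemma dyadicCutoff_eq_one_of_Einf_lt {k : ℕ} {x : ℝ} (h : Einf (baseDigit 2 x) < k) :
    dyadicCutoff k x = 1 := by
  refine min_eq_left (not_lt.mp fun hlt => h.not_ge ?_)
  have hdist : Metric.infDist x (dyadics k) < 1 / 4 ^ k := by
    rwa [lt_div_iff₀ (by positivity), mul_comm]
  obtain ⟨t, ht, hxt⟩ := (Metric.infDist_lt_iff (dyadics_nonempty k)).mp hdist
  exact le_Einf_baseDigit_two_of_dist_lt ht hxt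

lemma tendsto_kappaApprox (x : ℝ) :
    Tendsto (fun k => kappaApprox k x) atTop (𝓝 (kappa2 x)) := by
  have hprefix : Tendsto (fun k => kappaPrefix k x) atTop (𝓝 (kappa2 x)) :=
    tendsto_one_div_toReal_Efin_wordPrefix (baseDigit 2 x)
  by_cases htop : Einf (baseDigit 2 x) = ⊤
  · have hzero : kappa2 x = 0 := by simp [kappa2, kappaBase, htop]
    rw [hzero] at hprefix ⊢
    exact squeeze_zero (kappaApprox_nonneg · x) (kappaApprox_le_kappaPrefix · x) hprefix
  obtain ⟨k₀, hk₀⟩ := exists_nat_gt (Einf (baseDigit 2 x)).toReal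
  have hlt : Einf (baseDigit 2 x) < k₀ := by
    rw [← EReal.coe_toReal htop (ne_bot_of_le_ne_bot (EReal.coe_ne_bot 1) (one_le_Einf _))]
    exact_mod_cast hk₀
  refine hprefix.congr' (eventually_atTop.mpr ⟨k₀, fun k hk => ?_⟩)
  show kappaPrefix k x = kappaApprox k x
  rw [kappaApprox, dyadicCutoff_eq_one_of_Einf_lt (hlt.trans_le (by exact_mod_cast hk)), mul_one]

theorem stmt_4 :
    ∃ f : ℕ → ℝ → ℝ, (∀ k, ContinuousOn (f k) (Set.Icc (0 : ℝ) 1)) ∧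
      ∀ x ∈ Set.Icc (0 : ℝ) 1,
        Filter.Tendsto (fun k => f k x) Filter.atTop (nhds (kappa2 x)) :=
  ⟨kappaApprox, fun k => (continuous_kappaApprox k).continuousOn,
    fun x _ => tendsto_kappaApprox x⟩
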